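/- arXiv:2311.01932 — 2 statements merged into one kernel-verified Lean document; each statement's English description precedes it below -/
import Mathlib

section
/- Let p < q be positive integers, set α = p/q, and let x be a real number with 1 < x < 1/α = q/p. Then lim_{k→∞} (1/(qk)) · log T_{U_{qk,pk}}(x,0) = H(α), where H(α) = −α·log α − (1−α)·log(1−α). -/
open Set Filter Real

/-- The rank of a set in a matroid: the largest cardinality of an independent subset. -/
noncomputable def matroidRk {α : Type*} (M : Matroid α) (S : Set α) : ℕ :=
  sSup {n : ℕ | ∃ I, M.Indep I ∧ I ⊆ S ∧ I.ncard = n}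

/-- The Tutte polynomial of a matroid with finite ground set, evaluated at `(x, y)`. -/
noncomputable def tutte {α : Type*} (M : Matroid α) (hE : M.E.Finite) (x y : ℝ) : ℝ :=
  ∑ S ∈ hE.toFinset.powerset,
    (x - 1) ^ (matroidRk M M.E - matroidRk M (S : Set α)) *
      (y - 1) ^ (S.card - matroidRk M (S : Set α))

/-- The uniform matroid of rank `r` on the ground set `Fin n`. -/
noncomputable def unif (n r : ℕ) : Matroid (Fin n) :=
  (IndepMatroid.ofFinite Set.finite_univ (fun I => I.ncard ≤ r)
    (by simp)
    (fun I J hJ hIJ => le_trans (Set.ncard_le_ncard hIJ J.toFinite) hJ)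
    (fun I J _ hJ hIJ => by
      obtain ⟨e, heJ, heI⟩ := Set.exists_mem_notMem_of_ncard_lt_ncard hIJ I.toFinite
      exact ⟨e, heJ, heI, le_trans (Set.ncard_insert_le e I)
        (le_trans (Nat.succ_le_of_lt hIJ) hJ)⟩)
    (fun I _ => Set.subset_univ I)).matroid

/-- The `k`-thickening of a matroid: each element is replaced by `k` parallel copies. -/
noncomputable def thicken {α : Type*} (M : Matroid α) (k : ℕ) : Matroid (α × Fin k) :=
  M.comap Prod.fst

theorem thicken_ground_finite {α : Type*} {M : Matroid α} (hE : M.E.Finite) (k : ℕ) :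
    (thicken M k).E.Finite :=
  (hE.prod Set.finite_univ).subset fun x hx => ⟨hx, trivial⟩

lemma unif_indep_iff {n r : ℕ} {I : Set (Fin n)} : (unif n r).Indep I ↔ I.ncard ≤ r := by
  simp [unif]

lemma unif_E {n r : ℕ} : (unif n r).E = Set.univ := by simp [unif]

lemma matroidRk_unif {n r : ℕ} (S : Set (Fin n)) : matroidRk (unif n r) S = min S.ncard r := by
  have : {m : ℕ | ∃ I, (unif n r).Indep I ∧ I ⊆ S ∧ I.ncard = m} = Set.Iic (min S.ncard r) := by
    ext m
    simp only [mem_setOf_eq, mem_Iic, le_min_iff, unif_indep_iff]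
    constructor
    · rintro ⟨I, hIr, hIS, rfl⟩
      exact ⟨Set.ncard_le_ncard hIS S.toFinite, hIr⟩
    · rintro ⟨h1, h2⟩
      obtain ⟨t, hts, htc⟩ := Set.exists_subset_card_eq (s := S) h1
      exact ⟨t, by rw [htc]; exact h2, hts, htc⟩
  rw [matroidRk, this, csSup_Iic]

-- alternating partial sum of binomial coefficients
lemma alt_sum_choose (n : ℕ) (hn : 1 ≤ n) (m : ℕ) :
    ∑ j ∈ Finset.range (m + 1), (-1 : ℝ) ^ j * (n.choose j : ℝ)
      = (-1) ^ m * ((n - 1).choose m : ℝ) := by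
  induction m with
  | zero => simp
  | succ m ih =>
    rw [Finset.sum_range_succ, ih]
    obtain ⟨n', rfl⟩ := Nat.exists_eq_add_of_le hn
    have hch : ((1 + n' - 1).choose m : ℝ) + ((1 + n' - 1).choose (m+1) : ℝ)
        = ((1 + n').choose (m+1) : ℝ) := by
      rw [show 1 + n' - 1 = n' by omega, show 1 + n' = n' + 1 by omega]
      rw [Nat.choose_succ_succ]
      push_cast; ring
    rw [← hch]; ring

lemma tail_sum_choose (n r : ℕ) (hr : r < n) :
    ∑ j ∈ Finset.Ico (r + 1) (n + 1), (-1 : ℝ) ^ (j - r) * (n.choose j : ℝ)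
      = -((n - 1).choose r : ℝ) := by
  have hn : 1 ≤ n := by omega
  have h1 : ∀ j ∈ Finset.Ico (r + 1) (n + 1),
      (-1 : ℝ) ^ (j - r) * (n.choose j : ℝ)
        = (-1) ^ r * ((-1) ^ j * (n.choose j : ℝ)) := by
    intro j hj
    simp only [Finset.mem_Ico] at hj
    have key : (-1 : ℝ) ^ (j - r) = (-1) ^ r * (-1) ^ j := by
      rw [← pow_add]
      have h : r + j = (j - r) + 2 * r := by omega
      rw [h, pow_add, pow_mul]; norm_num
    rw [key]; ring
  rw [Finset.sum_congr rfl h1, ← Finset.mul_sum]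
  have hsplit : ∑ j ∈ Finset.range (r + 1), (-1 : ℝ) ^ j * (n.choose j : ℝ)
      + ∑ j ∈ Finset.Ico (r + 1) (n + 1), (-1 : ℝ) ^ j * (n.choose j : ℝ)
      = ∑ j ∈ Finset.range (n + 1), (-1 : ℝ) ^ j * (n.choose j : ℝ) := by
    simp only [Finset.range_eq_Ico]
    exact Finset.sum_Ico_consecutive _ (by omega) (by omega)
  have hfull : ∑ j ∈ Finset.range (n + 1), (-1 : ℝ) ^ j * (n.choose j : ℝ) = 0 := by
    rw [alt_sum_choose n hn n, Nat.choose_eq_zero_of_lt (by omega)]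
    simp
  have hhead := alt_sum_choose n hn r
  have : ∑ j ∈ Finset.Ico (r + 1) (n + 1), (-1 : ℝ) ^ j * (n.choose j : ℝ)
      = -((-1) ^ r * ((n - 1).choose r : ℝ)) := by
    rw [← hhead]; linarith [hsplit, hfull, hhead]
  rw [this]
  have : ((-1 : ℝ) ^ r) * ((-1) ^ r) = 1 := by
    rw [← pow_add, Even.neg_one_pow ⟨r, by ring⟩]
  calc (-1 : ℝ) ^ r * -((-1) ^ r * ((n - 1).choose r : ℝ))
      = -(((-1 : ℝ) ^ r * (-1) ^ r) * ((n - 1).choose r : ℝ)) := by ring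
    _ = -((n - 1).choose r : ℝ) := by rw [this, one_mul]

lemma tutte_unif_eval (n r : ℕ) (hr : 0 < r) (hrn : r < n) (x : ℝ) :
    tutte (unif n r) (Set.toFinite _) x 0
      = (∑ j ∈ Finset.range (r + 1), (n.choose j : ℝ) * (x - 1) ^ (r - j))
        - ((n - 1).choose r : ℝ) := by
  classical
  have hE : ((unif n r).E).Finite := Set.toFinite _
  have htf : (Set.toFinite ((unif n r).E)).toFinset = (Finset.univ : Finset (Fin n)) := by
    simp [unif_E]
  have hrkE : matroidRk (unif n r) (unif n r).E = r := by
    rw [unif_E, matroidRk_unif]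
    simp [Set.ncard_univ]
    omega
  have hstep : tutte (unif n r) (Set.toFinite _) x 0
      = ∑ S ∈ (Finset.univ : Finset (Fin n)).powerset,
          ((x - 1) ^ (r - min S.card r) * (-1 : ℝ) ^ (S.card - min S.card r)) := by
    rw [tutte, htf]
    refine Finset.sum_congr rfl fun S _ => ?_
    rw [hrkE, matroidRk_unif, Set.ncard_coe_finset]
    norm_num
  rw [hstep]
  have happ := Finset.sum_powerset_apply_card
    (fun m => (x - 1) ^ (r - min m r) * (-1 : ℝ) ^ (m - min m r))
    (x := (Finset.univ : Finset (Fin n)))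
  rw [happ]
  have hcard : (Finset.univ : Finset (Fin n)).card = n := by simp
  rw [hcard]
  have hsplit : ∑ m ∈ Finset.range (n + 1),
      (n.choose m) • ((x - 1) ^ (r - min m r) * (-1 : ℝ) ^ (m - min m r))
      = (∑ j ∈ Finset.range (r + 1),
          (n.choose j) • ((x - 1) ^ (r - min j r) * (-1 : ℝ) ^ (j - min j r)))
        + ∑ j ∈ Finset.Ico (r + 1) (n + 1),
          (n.choose j) • ((x - 1) ^ (r - min j r) * (-1 : ℝ) ^ (j - min j r)) := by
    simp only [Finset.range_eq_Ico]
    exact (Finset.sum_Ico_consecutive _ (by omega) (by omega)).symm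
  rw [hsplit]
  have h1 : ∑ j ∈ Finset.range (r + 1),
      (n.choose j) • ((x - 1) ^ (r - min j r) * (-1 : ℝ) ^ (j - min j r))
      = ∑ j ∈ Finset.range (r + 1), (n.choose j : ℝ) * (x - 1) ^ (r - j) := by
    refine Finset.sum_congr rfl fun j hj => ?_
    simp only [Finset.mem_range] at hj
    have hjr : j ≤ r := by omega
    rw [min_eq_left hjr, Nat.sub_self, pow_zero, mul_one, nsmul_eq_mul]
  have h2 : ∑ j ∈ Finset.Ico (r + 1) (n + 1),
      (n.choose j) • ((x - 1) ^ (r - min j r) * (-1 : ℝ) ^ (j - min j r))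
      = -((n - 1).choose r : ℝ) := by
    rw [← tail_sum_choose n r hrn]
    refine Finset.sum_congr rfl fun j hj => ?_
    simp only [Finset.mem_Ico] at hj
    have hjr : r ≤ j := by omega
    rw [min_eq_right hjr, Nat.sub_self, pow_zero, one_mul, nsmul_eq_mul]
    ring
  rw [h1, h2]
  ring


-- each term of the head sum is at most the top one
lemma choose_pow_le (n r : ℕ) (x : ℝ) (hx1 : 1 < x) (hrn : r ≤ n)
    (hxr : (x - 1) * r ≤ (n : ℝ) - r) :
    ∀ d j, j + d = r → (n.choose j : ℝ) * (x - 1) ^ d ≤ (n.choose r : ℝ) := by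
  intro d
  induction d with
  | zero => intro j hj; simp [show j = r by omega]
  | succ d ih =>
    intro j hj
    have hjr : j + 1 ≤ r := by omega
    have hj1 : (0 : ℝ) < (j : ℝ) + 1 := by positivity
    have hstep : (n.choose j : ℝ) * (x - 1) ≤ (n.choose (j + 1) : ℝ) := by
      have hid : (n.choose (j + 1) : ℝ) * ((j : ℝ) + 1) = (n.choose j : ℝ) * ((n : ℝ) - j) := by
        have := Nat.choose_succ_right_eq n j
        have hjn : j ≤ n := by omega
        have : ((n.choose (j + 1) * (j + 1) : ℕ) : ℝ) = ((n.choose j * (n - j) : ℕ) : ℝ) := by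
          exact_mod_cast congrArg (Nat.cast (R := ℝ)) this
        push_cast [Nat.cast_sub hjn] at this
        linarith
      have hx2 : (x - 1) * ((j : ℝ) + 1) ≤ (n : ℝ) - j := by
        have h1 : (x - 1) * ((j : ℝ) + 1) ≤ (x - 1) * r := by
          apply mul_le_mul_of_nonneg_left _ (by linarith)
          exact_mod_cast hjr
        have h2 : (n : ℝ) - r ≤ (n : ℝ) - j := by
          have : (j : ℝ) ≤ r := by exact_mod_cast (by omega : j ≤ r)
          linarith
        linarith
      have hcj : (0 : ℝ) ≤ (n.choose j : ℝ) := by positivity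
      have : (n.choose j : ℝ) * (x - 1) * ((j : ℝ) + 1) ≤ (n.choose (j + 1) : ℝ) * ((j : ℝ) + 1) := by
        rw [hid]
        calc (n.choose j : ℝ) * (x - 1) * ((j : ℝ) + 1)
            = (n.choose j : ℝ) * ((x - 1) * ((j : ℝ) + 1)) := by ring
          _ ≤ (n.choose j : ℝ) * ((n : ℝ) - j) := mul_le_mul_of_nonneg_left hx2 hcj
      exact le_of_mul_le_mul_right this hj1
    calc (n.choose j : ℝ) * (x - 1) ^ (d + 1)
        = ((n.choose j : ℝ) * (x - 1)) * (x - 1) ^ d := by ring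
      _ ≤ (n.choose (j + 1) : ℝ) * (x - 1) ^ d := by
          apply mul_le_mul_of_nonneg_right hstep (pow_nonneg (by linarith) d)
      _ ≤ (n.choose r : ℝ) := ih (j + 1) (by omega)

lemma head_sum_le (n r : ℕ) (x : ℝ) (hx1 : 1 < x) (hrn : r ≤ n)
    (hxr : (x - 1) * r ≤ (n : ℝ) - r) :
    ∑ j ∈ Finset.range (r + 1), (n.choose j : ℝ) * (x - 1) ^ (r - j)
      ≤ ((r : ℝ) + 1) * (n.choose r : ℝ) := by
  have h : ∀ j ∈ Finset.range (r + 1), (n.choose j : ℝ) * (x - 1) ^ (r - j)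
      ≤ (n.choose r : ℝ) := by
    intro j hj
    simp only [Finset.mem_range] at hj
    exact choose_pow_le n r x hx1 hrn hxr (r - j) j (by omega)
  calc ∑ j ∈ Finset.range (r + 1), (n.choose j : ℝ) * (x - 1) ^ (r - j)
      ≤ ∑ _j ∈ Finset.range (r + 1), (n.choose r : ℝ) := Finset.sum_le_sum h
    _ = ((r : ℝ) + 1) * (n.choose r : ℝ) := by
        rw [Finset.sum_const, Finset.card_range]; push_cast; ring

lemma head_sum_ge (n r : ℕ) (x : ℝ) (hx1 : 1 < x) :
    (n.choose r : ℝ) ≤ ∑ j ∈ Finset.range (r + 1), (n.choose j : ℝ) * (x - 1) ^ (r - j) := by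
  have := Finset.single_le_sum (f := fun j => (n.choose j : ℝ) * (x - 1) ^ (r - j))
    (fun j _ => mul_nonneg (Nat.cast_nonneg _) (pow_nonneg (by linarith) _)) (Finset.self_mem_range_succ r)
  simpa using this


-- generic: log (c*k) / (q*k) → 0
lemma aux_log_div (c : ℝ) (hc : 0 < c) (q : ℕ) (hq : 0 < q) :
    Tendsto (fun k : ℕ => Real.log (c * k) / ((q : ℝ) * k)) atTop (nhds 0) := by
  have h1 : Tendsto (fun x : ℝ => Real.log x / x) atTop (nhds 0) :=
    Real.isLittleO_log_id_atTop.tendsto_div_nhds_zero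
  have h2 : Tendsto (fun k : ℕ => c * k) atTop atTop :=
    (tendsto_natCast_atTop_atTop (R := ℝ)).const_mul_atTop hc
  have h3 : Tendsto (fun k : ℕ => Real.log (c * k) / (c * k)) atTop (nhds 0) := h1.comp h2
  have h4 : Tendsto (fun k : ℕ => (Real.log (c * k) / (c * k)) * (c / q)) atTop (nhds 0) := by
    simpa using h3.mul_const (c / q)
  refine h4.congr' ?_
  filter_upwards [eventually_ge_atTop 1] with k hk
  have hk0 : (0 : ℝ) < k := by exact_mod_cast hk
  field_simp

-- stirling piece : log (stirlingSeq (m*k)) / (q*k) → 0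
lemma aux_stirling_div (m q : ℕ) (hm : 0 < m) (hq : 0 < q) :
    Tendsto (fun k : ℕ => Real.log (Stirling.stirlingSeq (m * k)) / ((q : ℝ) * k))
      atTop (nhds 0) := by
  have hmk : Tendsto (fun k : ℕ => m * k) atTop atTop :=
    tendsto_atTop_mono (fun k => Nat.le_mul_of_pos_left k hm) tendsto_id
  have h1 : Tendsto (fun k : ℕ => Stirling.stirlingSeq (m * k)) atTop (nhds (√π)) :=
    Stirling.tendsto_stirlingSeq_sqrt_pi.comp hmk
  have hπ : (0 : ℝ) < √π := Real.sqrt_pos.2 Real.pi_pos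
  have h2 : Tendsto (fun k : ℕ => Real.log (Stirling.stirlingSeq (m * k))) atTop
      (nhds (Real.log (√π))) := ((Real.continuousAt_log hπ.ne').tendsto).comp h1
  have h3 : Tendsto (fun k : ℕ => ((q : ℝ) * k)) atTop atTop :=
    (tendsto_natCast_atTop_atTop (R := ℝ)).const_mul_atTop (by exact_mod_cast hq)
  exact h2.div_atTop h3

noncomputable def gSt (m : ℕ) : ℝ :=
  Real.log (Stirling.stirlingSeq m) + 1 / 2 * Real.log (2 * m)

lemma log_factorial_eq (m : ℕ) :
    Real.log (Nat.factorial m : ℝ) = gSt m + m * Real.log (m / Real.exp 1) := by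
  have := Stirling.log_stirlingSeq_formula m
  rw [gSt]; linarith

lemma g_div_tendsto (m q : ℕ) (hm : 0 < m) (hq : 0 < q) :
    Tendsto (fun k : ℕ => gSt (m * k) / ((q : ℝ) * k)) atTop (nhds 0) := by
  have h1 := aux_stirling_div m q hm hq
  have h2 := (aux_log_div (2 * m) (by positivity) q hq).const_mul (1 / 2)
  have h3 := h1.add h2
  rw [mul_zero, add_zero] at h3
  refine h3.congr fun k => ?_
  rw [gSt, add_div]
  congr 1
  rw [mul_div_assoc]
  congr 2
  push_cast
  ring

lemma log_choose_tendsto (p q : ℕ) (hp : 0 < p) (hpq : p < q) :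
    Tendsto (fun k : ℕ => Real.log (((q * k).choose (p * k) : ℝ)) / ((q : ℝ) * k)) atTop
      (nhds (-((p : ℝ) / q) * Real.log ((p : ℝ) / q) -
        (1 - (p : ℝ) / q) * Real.log (1 - (p : ℝ) / q))) := by
  set a : ℝ := (p : ℝ) with ha
  set b : ℝ := (q : ℝ) with hb
  have hb0 : (0 : ℝ) < b := by rw [hb]; exact_mod_cast hp.trans hpq
  have ha0 : (0 : ℝ) < a := by rw [ha]; exact_mod_cast hp
  have hba : a < b := by rw [ha, hb]; exact_mod_cast hpq
  set L : ℝ := -(a / b) * Real.log (a / b) - (1 - a / b) * Real.log (1 - a / b) with hL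
  -- limit of the error terms
  have hq0 : 0 < q := hp.trans hpq
  have hqp : 0 < q - p := by omega
  have heps : Tendsto (fun k : ℕ =>
      (gSt (q * k) - gSt (p * k) - gSt ((q - p) * k)) / ((q : ℝ) * k)) atTop (nhds 0) := by
    have h := ((g_div_tendsto q q hq0 hq0).sub (g_div_tendsto p q hp hq0)).sub
      (g_div_tendsto (q - p) q hqp hq0)
    rw [sub_zero, sub_zero] at h
    refine h.congr fun k => ?_
    rw [sub_div, sub_div]
  have hmain : Tendsto (fun k : ℕ => L +
      (gSt (q * k) - gSt (p * k) - gSt ((q - p) * k)) / ((q : ℝ) * k)) atTop (nhds L) := by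
    have := (tendsto_const_nhds (x := L) (f := atTop (α := ℕ))).add heps
    rwa [add_zero] at this
  refine hmain.congr' ?_
  filter_upwards [eventually_ge_atTop 1] with k hk
  have hk0 : (0 : ℝ) < (k : ℝ) := by exact_mod_cast hk
  -- identity for fixed k ≥ 1
  have hle : p * k ≤ q * k := Nat.mul_le_mul_right k hpq.le
  have hsub : q * k - p * k = (q - p) * k := (Nat.sub_mul q p k).symm
  have hchoose := Nat.choose_mul_factorial_mul_factorial hle
  rw [hsub] at hchoose
  have hC0 : (0 : ℝ) < (((q * k).choose (p * k) : ℕ) : ℝ) := by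
    exact_mod_cast Nat.choose_pos hle
  have hf1 : (0 : ℝ) < (Nat.factorial (p * k) : ℝ) := by exact_mod_cast Nat.factorial_pos _
  have hf2 : (0 : ℝ) < (Nat.factorial ((q - p) * k) : ℝ) := by
    exact_mod_cast Nat.factorial_pos _
  have hlogC : Real.log (((q * k).choose (p * k) : ℕ) : ℝ)
      = Real.log (Nat.factorial (q * k) : ℝ) - Real.log (Nat.factorial (p * k) : ℝ)
        - Real.log (Nat.factorial ((q - p) * k) : ℝ) := by
    have : ((Nat.factorial (q * k) : ℕ) : ℝ)
        = (((q * k).choose (p * k) : ℕ) : ℝ) * (Nat.factorial (p * k) : ℝ)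
          * (Nat.factorial ((q - p) * k) : ℝ) := by exact_mod_cast hchoose.symm
    rw [this, Real.log_mul (by positivity) hf2.ne', Real.log_mul hC0.ne' hf1.ne']
    ring
  rw [hlogC, log_factorial_eq, log_factorial_eq, log_factorial_eq]
  -- expand the logs
  have hexp : ∀ m : ℕ, 0 < m → Real.log (((m * k : ℕ) : ℝ) / Real.exp 1)
      = Real.log (m : ℝ) + Real.log (k : ℝ) - 1 := by
    intro m hm
    have hm0 : (0 : ℝ) < (m : ℝ) := by exact_mod_cast hm
    rw [Real.log_div (by positivity) (Real.exp_ne_zero 1), Real.log_exp]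
    push_cast
    rw [Real.log_mul hm0.ne' hk0.ne']
  rw [hexp q hq0, hexp p hp, hexp (q - p) hqp]
  -- now pure algebra
  have hcast : (((q - p : ℕ)) : ℝ) = b - a := by rw [ha, hb]; push_cast [hpq.le]; ring
  have hLrw : L = Real.log b - (a / b) * Real.log a
      - ((b - a) / b) * Real.log (b - a) := by
    rw [hL]
    have h1 : Real.log (a / b) = Real.log a - Real.log b := Real.log_div ha0.ne' hb0.ne'
    have h2 : (1 : ℝ) - a / b = (b - a) / b := by field_simp
    have h3 : Real.log ((b - a) / b) = Real.log (b - a) - Real.log b :=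
      Real.log_div (by linarith) hb0.ne'
    rw [h1, h2, h3]
    field_simp
    ring
  have hcq : ((q : ℝ)) = b := hb.symm
  have hcp : ((p : ℝ)) = a := ha.symm
  push_cast [hcast]
  rw [hcq, hcp, hLrw]
  have hbk : b * (k : ℝ) ≠ 0 := by positivity
  field_simp
  ring


lemma tutte_key_bounds (p q : ℕ) (hp : 0 < p) (hpq : p < q) (x : ℝ) (hx1 : 1 < x)
    (hx2 : x < (q : ℝ) / p) (k : ℕ) (hk : 1 ≤ k) :
    ((p : ℝ) / q) * (((q * k).choose (p * k)) : ℝ)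
        ≤ tutte (unif (q * k) (p * k)) (Set.toFinite _) x 0 ∧
      tutte (unif (q * k) (p * k)) (Set.toFinite _) x 0
        ≤ ((q : ℝ) * k) * (((q * k).choose (p * k)) : ℝ) := by
  have hq0 : 0 < q := hp.trans hpq
  have hb0 : (0 : ℝ) < (q : ℝ) := by exact_mod_cast hq0
  have ha0 : (0 : ℝ) < (p : ℝ) := by exact_mod_cast hp
  have hk0 : (0 : ℝ) < (k : ℝ) := by exact_mod_cast hk
  have hr0 : 0 < p * k := Nat.mul_pos hp hk
  have hrn : p * k < q * k := (Nat.mul_lt_mul_right hk).mpr hpq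
  have hqk0 : (0 : ℝ) < (q : ℝ) * k := by positivity
  set n := q * k with hn
  set r := p * k with hr
  have hcr : (r : ℝ) = (p : ℝ) * k := by rw [hr]; push_cast; ring
  have hcn : (n : ℝ) = (q : ℝ) * k := by rw [hn]; push_cast; ring
  have hC0 : (0 : ℝ) < (n.choose r : ℝ) := by exact_mod_cast Nat.choose_pos hrn.le
  have hxp : x * (p : ℝ) ≤ (q : ℝ) := by
    have h := (lt_div_iff₀ ha0).mp hx2
    linarith
  have hxr : (x - 1) * (r : ℝ) ≤ (n : ℝ) - (r : ℝ) := by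
    have h1 : x * ((p : ℝ) * k) ≤ (q : ℝ) * k := by
      have h := mul_le_mul_of_nonneg_right hxp hk0.le
      calc x * ((p : ℝ) * k) = x * (p : ℝ) * k := by ring
        _ ≤ (q : ℝ) * k := h
    rw [hcr, hcn]; nlinarith
  have heval := tutte_unif_eval n r hr0 hrn x
  have hpascal : n.choose r = (n - 1).choose (r - 1) + (n - 1).choose r := by
    obtain ⟨m', hm'⟩ := Nat.exists_eq_add_of_le (show 1 ≤ n by omega)
    obtain ⟨s', hs'⟩ := Nat.exists_eq_add_of_le (show 1 ≤ r by omega)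
    rw [hm', hs', show 1 + m' = m' + 1 by omega, show 1 + s' = s' + 1 by omega]
    simp [Nat.choose_succ_succ]
  have hratio : (n : ℝ) * ((n - 1).choose (r - 1) : ℝ) = (n.choose r : ℝ) * (r : ℝ) := by
    have h := Nat.add_one_mul_choose_eq (n - 1) (r - 1)
    rw [show n - 1 + 1 = n by omega, show r - 1 + 1 = r by omega] at h
    exact_mod_cast congrArg (Nat.cast (R := ℝ)) h
  have hprev : ((n - 1).choose (r - 1) : ℝ) = ((p : ℝ) / q) * (n.choose r : ℝ) := by
    have hn0 : (0 : ℝ) < (n : ℝ) := by rw [hcn]; positivity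
    have h1 : (n : ℝ) * ((n - 1).choose (r - 1) : ℝ)
        = (n : ℝ) * (((p : ℝ) / q) * (n.choose r : ℝ)) := by
      rw [hratio, hcr, hcn]
      field_simp
    exact mul_left_cancel₀ hn0.ne' h1
  have hprev_pos : (0 : ℝ) < ((n - 1).choose (r - 1) : ℝ) := by
    rw [hprev]; positivity
  have hpascalR : ((n - 1).choose (r - 1) : ℝ) + ((n - 1).choose r : ℝ) = (n.choose r : ℝ) := by
    exact_mod_cast congrArg (Nat.cast (R := ℝ)) hpascal.symm
  constructor
  · rw [heval, ← hprev]
    have h1 := head_sum_ge n r x hx1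
    linarith
  · rw [heval]
    have h1 := head_sum_le n r x hx1 hrn.le hxr
    have h2 : ((r : ℝ) + 1) ≤ (q : ℝ) * k := by
      have h3 : r + 1 ≤ q * k := by
        have h4 : p * k + k ≤ q * k := by
          calc p * k + k = (p + 1) * k := by ring
            _ ≤ q * k := Nat.mul_le_mul_right k (by omega)
        omega
      calc ((r : ℝ) + 1) = ((r + 1 : ℕ) : ℝ) := by push_cast; ring
        _ ≤ ((q * k : ℕ) : ℝ) := by exact_mod_cast h3
        _ = (q : ℝ) * k := by push_cast; ring
    have h3 : (0 : ℝ) ≤ ((n - 1).choose r : ℝ) := by positivity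
    nlinarith

/-- Exponential growth rate of `T_{U_{n,αn}}(x,0)` for `1 < x < 1/α`, where `α = p/q`:
the limit of `(1/(qk)) log T_{U_{qk,pk}}(x,0)` is the entropy `H(α)`. -/
theorem tutte_unif_growth_sparse (p q : ℕ) (hp : 0 < p) (hpq : p < q)
    (x : ℝ) (hx1 : 1 < x) (hx2 : x < (q : ℝ) / p) :
    Filter.Tendsto
      (fun k : ℕ => 1 / ((q : ℝ) * k) *
        Real.log (tutte (unif (q * k) (p * k)) (Set.toFinite _) x 0))
      Filter.atTop
      (nhds (-((p : ℝ) / q) * Real.log ((p : ℝ) / q) -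
        (1 - (p : ℝ) / q) * Real.log (1 - (p : ℝ) / q))) := by
  have hq0 : 0 < q := hp.trans hpq
  have hb0 : (0 : ℝ) < (q : ℝ) := by exact_mod_cast hq0
  have ha0 : (0 : ℝ) < (p : ℝ) := by exact_mod_cast hp
  have hdenom : Tendsto (fun k : ℕ => ((q : ℝ) * k)) atTop atTop :=
    (tendsto_natCast_atTop_atTop (R := ℝ)).const_mul_atTop hb0
  have hC := log_choose_tendsto p q hp hpq
  have hlo_lim : Tendsto (fun k : ℕ => (Real.log ((p : ℝ) / q) +
      Real.log (((q * k).choose (p * k) : ℝ))) / ((q : ℝ) * k)) atTop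
      (nhds (-((p : ℝ) / q) * Real.log ((p : ℝ) / q) -
        (1 - (p : ℝ) / q) * Real.log (1 - (p : ℝ) / q))) := by
    have h1 : Tendsto (fun k : ℕ => Real.log ((p : ℝ) / q) / ((q : ℝ) * k)) atTop (nhds 0) :=
      tendsto_const_nhds.div_atTop hdenom
    have h2 := h1.add hC
    rw [zero_add] at h2
    exact h2.congr fun k => (add_div _ _ _).symm
  have hup_lim : Tendsto (fun k : ℕ => (Real.log ((q : ℝ) * k) +
      Real.log (((q * k).choose (p * k) : ℝ))) / ((q : ℝ) * k)) atTop
      (nhds (-((p : ℝ) / q) * Real.log ((p : ℝ) / q) -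
        (1 - (p : ℝ) / q) * Real.log (1 - (p : ℝ) / q))) := by
    have h1 := aux_log_div (q : ℝ) hb0 q hq0
    have h2 := h1.add hC
    rw [zero_add] at h2
    exact h2.congr fun k => (add_div _ _ _).symm
  refine tendsto_of_tendsto_of_tendsto_of_le_of_le' hlo_lim hup_lim ?_ ?_
  · filter_upwards [eventually_ge_atTop 1] with k hk
    obtain ⟨h1, _⟩ := tutte_key_bounds p q hp hpq x hx1 hx2 k hk
    have hk0 : (0 : ℝ) < (k : ℝ) := by exact_mod_cast hk
    have hqk0 : (0 : ℝ) < (q : ℝ) * k := by positivity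
    have hC0 : (0 : ℝ) < (((q * k).choose (p * k)) : ℝ) := by
      exact_mod_cast Nat.choose_pos (Nat.mul_le_mul_right k hpq.le)
    have hpq0 : (0 : ℝ) < (p : ℝ) / q := by positivity
    rw [one_div_mul_eq_div]
    refine (div_le_div_iff_of_pos_right hqk0).mpr ?_
    rw [← Real.log_mul hpq0.ne' hC0.ne']
    exact Real.log_le_log (by positivity) h1
  · filter_upwards [eventually_ge_atTop 1] with k hk
    obtain ⟨h1, h2⟩ := tutte_key_bounds p q hp hpq x hx1 hx2 k hk
    have hk0 : (0 : ℝ) < (k : ℝ) := by exact_mod_cast hk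
    have hqk0 : (0 : ℝ) < (q : ℝ) * k := by positivity
    have hC0 : (0 : ℝ) < (((q * k).choose (p * k)) : ℝ) := by
      exact_mod_cast Nat.choose_pos (Nat.mul_le_mul_right k hpq.le)
    have hpq0 : (0 : ℝ) < (p : ℝ) / q := by positivity
    have hT0 : (0 : ℝ) < tutte (unif (q * k) (p * k)) (Set.toFinite _) x 0 :=
      lt_of_lt_of_le (by positivity) h1
    rw [one_div_mul_eq_div]
    refine (div_le_div_iff_of_pos_right hqk0).mpr ?_
    rw [← Real.log_mul hqk0.ne' hC0.ne']
    exact Real.log_le_log hT0 h2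
end

section
/- The function g(α) = 2^{2α} / (α^{2α}·(1−α)^{2(1−α)}) defined for real α ∈ (0,1) attains its maximum at α = 2/3, where it takes the value 9; that is, g(2/3) = 9 and g(α) ≤ 9 for all α ∈ (0,1). -/
open Set

lemma g_eq_sq (α : ℝ) (h0 : 0 < α) (h1 : α < 1) :
    (2 : ℝ) ^ (2 * α) / (α ^ (2 * α) * (1 - α) ^ (2 * (1 - α))) =
      ((2 / α) ^ α * ((1 - α)⁻¹) ^ (1 - α)) ^ 2 := by
  have h1α : (0:ℝ) < 1 - α := by linarith
  rw [mul_pow, ← Real.rpow_natCast ((2/α) ^ α) 2,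
      ← Real.rpow_natCast (((1-α)⁻¹) ^ (1-α)) 2,
      ← Real.rpow_mul (by positivity), ← Real.rpow_mul (by positivity),
      Real.div_rpow (by norm_num) h0.le, Real.inv_rpow h1α.le]
  push_cast
  rw [mul_comm α 2, mul_comm (1-α) 2]
  have h2 : α ^ (2*α) ≠ 0 := by positivity
  have h3 : (1-α) ^ (2*(1-α)) ≠ 0 := by positivity
  field_simp

/-- The function `g(α) = 2^{2α} / (α^{2α} (1-α)^{2(1-α)})` on `(0,1)` attains its maximum
value `9` at `α = 2/3`. -/
theorem g_max_at_two_thirds :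
    (2 : ℝ) ^ (2 * (2 / 3 : ℝ)) /
        ((2 / 3 : ℝ) ^ (2 * (2 / 3 : ℝ)) *
          (1 - 2 / 3 : ℝ) ^ (2 * (1 - 2 / 3 : ℝ))) = 9 ∧
    ∀ α : ℝ, α ∈ Set.Ioo (0 : ℝ) 1 →
      (2 : ℝ) ^ (2 * α) / (α ^ (2 * α) * (1 - α) ^ (2 * (1 - α))) ≤ 9 := by
  constructor
  · rw [g_eq_sq (2/3) (by norm_num) (by norm_num)]
    norm_num
    rw [← Real.rpow_add (by norm_num)]
    norm_num
  · rintro α ⟨h0, h1⟩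
    have h1α : (0:ℝ) < 1 - α := by linarith
    rw [g_eq_sq α h0 h1]
    have key : (2 / α) ^ α * ((1 - α)⁻¹) ^ (1 - α) ≤ α * (2/α) + (1-α) * (1-α)⁻¹ :=
      Real.geom_mean_le_arith_mean2_weighted h0.le h1α.le (by positivity) (by positivity)
        (by ring)
    have h3 : α * (2/α) + (1-α) * (1-α)⁻¹ = 3 := by
      field_simp
      norm_num
    rw [h3] at key
    calc ((2 / α) ^ α * ((1 - α)⁻¹) ^ (1 - α)) ^ 2 ≤ 3 ^ 2 := by
          apply pow_le_pow_left₀ (by positivity) key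
      _ = 9 := by norm_num
end
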